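/- arXiv:math/0602505 — 2 statements merged into one kernel-verified Lean document; each statement's English description precedes it below -/
import Mathlib

section
/- If θ ∈ (0, 1/4] and θ̃ ∈ [θ/3, 3θ] with θ̃ ∈ (0,1), then D(θ‖θ̃) ≤ 3(θ−θ̃)² / (2·θ*(1−θ*)), where θ* = max{θ, θ̃}. -/
noncomputable def klBern (θ θt : ℝ) : ℝ :=
  θ * Real.log (θ / θt) + (1 - θ) * Real.log ((1 - θ) / (1 - θt))

/-!
As a function of its second argument, `D(θ‖t)` vanishes at `t = θ` and has derivative
`(t - θ) / (t (1 - t))`. Hence, if `x (1 - x) ≥ c` for all `x` between `θ` and `t`, comparing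
derivatives with `(t - θ)² / (2c)` gives `D(θ‖t) ≤ (θ - t)² / (2c)`. When the two endpoints are
within a factor `3` of each other, the smaller one is at least `θ*/3`, so `x (1 - x) ≥ θ* (1 - θ*) / 3`
on the whole interval.
-/

open Real Set

lemma mul_log_div_eq {a y : ℝ} (hy : y ≠ 0) : a * log (a / y) = a * log a - a * log y := by
  rcases eq_or_ne a 0 with rfl | ha
  · simp
  · rw [log_div ha hy]; ring

lemma klBern_eq {θ y : ℝ} (hy₀ : y ≠ 0) (hy₁ : 1 - y ≠ 0) :
    klBern θ y = θ * log θ - θ * log y + ((1 - θ) * log (1 - θ) - (1 - θ) * log (1 - y)) := by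
  rw [klBern, mul_log_div_eq hy₀, mul_log_div_eq hy₁]

@[simp]
lemma klBern_self (θ : ℝ) : klBern θ θ = 0 := by
  simp [klBern]

lemma hasDerivAt_klBern {θ y : ℝ} (hy₀ : 0 < y) (hy₁ : y < 1) :
    HasDerivAt (klBern θ) ((y - θ) / (y * (1 - y))) y := by
  have h₁ := (hasDerivAt_log hy₀.ne').const_mul θ
  have h₂ := ((hasDerivAt_log (sub_pos.2 hy₁).ne').comp y
    ((hasDerivAt_id y).const_sub 1)).const_mul (1 - θ)
  have h := (h₁.const_sub (θ * log θ)).add (h₂.const_sub ((1 - θ) * log (1 - θ)))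
  refine (h.congr_of_eventuallyEq ?_).congr_deriv ?_
  · filter_upwards [isOpen_Ioo.mem_nhds ⟨hy₀, hy₁⟩] with z hz
    exact klBern_eq hz.1.ne' (sub_pos.2 hz.2).ne'
  · have : 1 - y ≠ 0 := (sub_pos.2 hy₁).ne'
    field_simp
    ring

lemma le_of_hasDerivAt_mul_sub_nonneg {f f' : ℝ → ℝ} {a b : ℝ}
    (hf : ∀ x ∈ uIcc a b, HasDerivAt f (f' x) x) (hf' : ∀ x ∈ uIcc a b, 0 ≤ (x - a) * f' x) :
    f a ≤ f b := by
  have hcont : ContinuousOn f (uIcc a b) := fun x hx => (hf x hx).continuousAt.continuousWithinAt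
  rcases le_total a b with hab | hba
  · rw [uIcc_of_le hab] at hf hf' hcont
    refine monotoneOn_of_deriv_nonneg (convex_Icc a b) hcont ?_ ?_ ⟨le_rfl, hab⟩ ⟨hab, le_rfl⟩ hab
    · rw [interior_Icc]
      exact fun x hx => (hf x (Ioo_subset_Icc_self hx)).differentiableAt.differentiableWithinAt
    · rw [interior_Icc]
      intro x hx
      rw [(hf x (Ioo_subset_Icc_self hx)).deriv]
      exact nonneg_of_mul_nonneg_right (hf' x (Ioo_subset_Icc_self hx)) (sub_pos.2 hx.1)
  · rw [uIcc_of_ge hba] at hf hf' hcont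
    refine antitoneOn_of_deriv_nonpos (convex_Icc b a) hcont ?_ ?_ ⟨le_rfl, hba⟩ ⟨hba, le_rfl⟩ hba
    · rw [interior_Icc]
      exact fun x hx => (hf x (Ioo_subset_Icc_self hx)).differentiableAt.differentiableWithinAt
    · rw [interior_Icc]
      intro x hx
      rw [(hf x (Ioo_subset_Icc_self hx)).deriv]
      exact nonpos_of_mul_nonneg_right (hf' x (Ioo_subset_Icc_self hx)) (sub_neg.2 hx.2)

lemma klBern_le_sq_div {θ t c : ℝ} (hc : 0 < c) (hcurv : ∀ x ∈ uIcc θ t, c ≤ x * (1 - x)) :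
    klBern θ t ≤ (θ - t) ^ 2 / (2 * c) := by
  have hpos : ∀ x ∈ uIcc θ t, 0 < x * (1 - x) := fun x hx => hc.trans_le (hcurv x hx)
  have hderiv : ∀ x ∈ uIcc θ t, HasDerivAt (fun y => (y - θ) ^ 2 / (2 * c) - klBern θ y)
      ((x - θ) / c - (x - θ) / (x * (1 - x))) x := by
    intro x hx
    have hx₀ : 0 < x := by nlinarith [hpos x hx]
    have hx₁ : x < 1 := by nlinarith [hpos x hx]
    have hsq := (((hasDerivAt_id' x).sub_const θ).pow 2).div_const (2 * c)
    refine (hsq.sub (hasDerivAt_klBern hx₀ hx₁)).congr_deriv ?_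
    field_simp
    ring
  have hsign : ∀ x ∈ uIcc θ t, 0 ≤ (x - θ) * ((x - θ) / c - (x - θ) / (x * (1 - x))) := by
    intro x hx
    have : 1 / (x * (1 - x)) ≤ 1 / c := one_div_le_one_div_of_le hc (hcurv x hx)
    calc (0 : ℝ) ≤ (x - θ) ^ 2 * (1 / c - 1 / (x * (1 - x))) :=
          mul_nonneg (sq_nonneg _) (sub_nonneg.2 this)
      _ = _ := by ring
  rw [sub_sq_comm]
  simpa using le_of_hasDerivAt_mul_sub_nonneg hderiv hsign

lemma max_mul_one_sub_max_div_three_le {a b x : ℝ} (h₃ : max a b ≤ 3 * min a b)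
    (h₁ : max a b ≤ 1) (hx : x ∈ uIcc a b) : max a b * (1 - max a b) / 3 ≤ x * (1 - x) := by
  obtain ⟨hlo, hhi⟩ := hx
  have hmin : 0 ≤ min a b := by linarith [min_le_max (a := a) (b := b)]
  nlinarith [mul_nonneg (by linarith : 0 ≤ x - max a b / 3) (by linarith : 0 ≤ 1 - x),
    mul_nonneg (by linarith : 0 ≤ max a b) (by linarith : 0 ≤ max a b - x)]

theorem kl_upper_bound_near_boundary (θ θt : ℝ)
    (hθ : θ ∈ Set.Ioc (0:ℝ) (1/4)) (hθt : θt ∈ Set.Icc (θ/3) (3*θ))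
    (hθt' : θt ∈ Set.Ioo (0:ℝ) 1) :
    klBern θ θt ≤ 3 * (θ - θt) ^ 2 / (2 * max θ θt * (1 - max θ θt)) := by
  obtain ⟨hθ₀, hθ₁⟩ := hθ
  have h₃ : max θ θt ≤ 3 * min θ θt := by
    rcases le_total θ θt with h | h <;> simp [h] <;> linarith [hθt.1, hθt.2]
  have h₁ : max θ θt < 1 := max_lt (by linarith) hθt'.2
  have hc : 0 < max θ θt * (1 - max θ θt) / 3 := by
    have := hθ₀.trans_le (le_max_left θ θt)
    have := sub_pos.2 h₁
    positivity
  calc klBern θ θt ≤ (θ - θt) ^ 2 / (2 * (max θ θt * (1 - max θ θt) / 3)) :=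
        klBern_le_sq_div hc fun x hx => max_mul_one_sub_max_div_three_le h₃ h₁.le hx
    _ = _ := by field_simp
end

section
/- Let θ₀ ∈ (0,1), n ≥ 2, 1 ≤ k ≤ n−1, and α = k/n. Then C(n,k)·θ₀^k·(1−θ₀)^{n−k} ≥ (8·α(1−α)·n)^{−1/2} · exp(−n·D(α‖θ₀)). -/
/-!
With `α = k/n` and `m = n - k`, one has `θ₀^k (1-θ₀)^m = α^k (1-α)^m · exp(-n D(α‖θ₀))`, so the
claim is `C(n,k) α^k (1-α)^m √(8α(1-α)n) ≥ 1`. Writing `j! = s_j √(2j) (j/e)^j` with `s` the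
Stirling sequence, the left side equals `2 s_n / (s_k s_m)`. The steps `log s_j - log s_(j+1)`
decrease in `j`, so `log s_k + log s_m - log s_(k+m)` decreases in `k` and in `m`; at `k = m = 1`
it is `log 2` (equality holds for `n = 2`).
-/

open Real

lemma exp_neg_mul_klBern {α θ n : ℝ} (k m : ℕ) (hα : α ∈ Set.Ioo 0 1) (hθ : θ ∈ Set.Ioo 0 1)
    (hk : n * α = k) (hm : n * (1 - α) = m) :
    exp (-n * klBern α θ) = (θ / α) ^ k * ((1 - θ) / (1 - α)) ^ m := by
  obtain ⟨hα0, hα1⟩ := hα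
  obtain ⟨hθ0, hθ1⟩ := hθ
  have h1α : 0 < 1 - α := sub_pos.mpr hα1
  have h1θ : 0 < 1 - θ := sub_pos.mpr hθ1
  have hlog : -n * klBern α θ = k * log (θ / α) + m * log ((1 - θ) / (1 - α)) := by
    rw [klBern, ← hk, ← hm, log_div hα0.ne' hθ0.ne', log_div h1α.ne' h1θ.ne',
      log_div hθ0.ne' hα0.ne', log_div h1θ.ne' h1α.ne']
    ring
  rw [hlog, exp_add, exp_nat_mul, exp_nat_mul, exp_log (by positivity), exp_log (by positivity)]

namespace Stirling

lemma stirlingSeq_pos {n : ℕ} (hn : n ≠ 0) : 0 < stirlingSeq n := by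
  obtain ⟨n, rfl⟩ := Nat.exists_eq_succ_of_ne_zero hn
  exact stirlingSeq'_pos n

lemma stirlingSeq_two : stirlingSeq 2 = exp 1 ^ 2 / 4 := by
  rw [stirlingSeq, show √(2 * (2 : ℕ) : ℝ) = 2 by
    rw [show (2 * (2 : ℕ) : ℝ) = 2 ^ 2 by norm_num]; exact sqrt_sq zero_le_two]
  simp only [Nat.factorial, Nat.cast_ofNat]
  field_simp
  norm_num

lemma two_mul_log_stirlingSeq_one_sub_log_stirlingSeq_two :
    2 * log (stirlingSeq 1) - log (stirlingSeq 2) = log 2 := by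
  rw [stirlingSeq_one, stirlingSeq_two, two_mul, ← log_mul (by positivity) (by positivity),
    ← log_div (by positivity) (by positivity)]
  congr 1
  field_simp
  rw [sq_sqrt zero_le_two]
  ring

/-- Each step is a series whose terms decrease termwise in `n`. -/
lemma log_stirlingSeq_sdiff_antitone :
    Antitone fun n : ℕ => log (stirlingSeq (n + 1)) - log (stirlingSeq (n + 2)) := by
  refine antitone_nat_of_succ_le fun n => hasSum_le (fun j => ?_)
    (log_stirlingSeq_sdiff_hasSum (n + 1)) (log_stirlingSeq_sdiff_hasSum n)
  gcongr
  linarith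

lemma log_stirlingSeq_add_sub_le (k m : ℕ) :
    log (stirlingSeq (k + 1)) + log (stirlingSeq (m + 1)) - log (stirlingSeq (k + m + 2))
      ≤ log 2 := by
  induction k with
  | zero =>
    have := log_stirlingSeq_sdiff_antitone (Nat.zero_le m)
    rw [← two_mul_log_stirlingSeq_one_sub_log_stirlingSeq_two]
    simp only [zero_add] at this ⊢
    linarith
  | succ k ih =>
    have := log_stirlingSeq_sdiff_antitone (Nat.le_add_right k (m + 1))
    simp only [← add_assoc] at this
    rw [show k + 1 + m + 2 = k + m + 3 by omega]
    linarith

lemma stirlingSeq_mul_le_two_mul {k m : ℕ} (hk : k ≠ 0) (hm : m ≠ 0) :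
    stirlingSeq k * stirlingSeq m ≤ 2 * stirlingSeq (k + m) := by
  have hkm : k + m ≠ 0 := by omega
  rw [← log_le_log_iff (mul_pos (stirlingSeq_pos hk) (stirlingSeq_pos hm))
      (mul_pos two_pos (stirlingSeq_pos hkm)),
    log_mul (stirlingSeq_pos hk).ne' (stirlingSeq_pos hm).ne',
    log_mul two_ne_zero (stirlingSeq_pos hkm).ne']
  obtain ⟨k, rfl⟩ := Nat.exists_eq_succ_of_ne_zero hk
  obtain ⟨m, rfl⟩ := Nat.exists_eq_succ_of_ne_zero hm
  rw [show k + 1 + (m + 1) = k + m + 2 by omega]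
  linarith [log_stirlingSeq_add_sub_le k m]

lemma choose_mul_pow_mul_sqrt_eq {k m : ℕ} (hk : k ≠ 0) (hm : m ≠ 0) :
    ((k + m).choose k : ℝ) * ((k / (k + m) : ℝ) ^ k * (m / (k + m) : ℝ) ^ m)
        * √(8 * (k / (k + m)) * (m / (k + m)) * (k + m))
      = 2 * stirlingSeq (k + m) / (stirlingSeq k * stirlingSeq m) := by
  have hk' : (0 : ℝ) < k := by positivity
  have hm' : (0 : ℝ) < m := by positivity
  have hsqrt : √(8 * (k / (k + m)) * (m / (k + m)) * (k + m) : ℝ)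
      = 2 * √(2 * k) * √(2 * m) / √(2 * (k + m)) := by
    rw [show (8 * (k / (k + m)) * (m / (k + m)) * (k + m) : ℝ)
        = 2 ^ 2 * (2 * k) * (2 * m) / (2 * (k + m)) by field_simp; ring,
      sqrt_div' _ (by positivity), sqrt_mul' _ (by positivity), sqrt_mul' _ (by positivity),
      sqrt_sq zero_le_two]
  rw [Nat.cast_choose ℝ (Nat.le_add_right k m), Nat.add_sub_cancel_left, hsqrt]
  simp only [stirlingSeq, div_pow, Nat.cast_add, pow_add]
  field_simp

lemma one_le_choose_mul_pow_mul_sqrt {k m : ℕ} (hk : k ≠ 0) (hm : m ≠ 0) :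
    1 ≤ ((k + m).choose k : ℝ) * ((k / (k + m) : ℝ) ^ k * (m / (k + m) : ℝ) ^ m)
        * √(8 * (k / (k + m)) * (m / (k + m)) * (k + m)) := by
  rw [choose_mul_pow_mul_sqrt_eq hk hm,
    one_le_div (mul_pos (stirlingSeq_pos hk) (stirlingSeq_pos hm))]
  exact stirlingSeq_mul_le_two_mul hk hm

end Stirling

theorem binomial_lower_bound_general (θ₀ : ℝ) (hθ₀ : θ₀ ∈ Set.Ioo (0:ℝ) 1)
    (n k : ℕ) (hk : 1 ≤ k) (hk' : k ≤ n - 1) :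
    (n.choose k : ℝ) * θ₀ ^ k * (1 - θ₀) ^ (n - k) ≥
      (1 / Real.sqrt (8 * ((k:ℝ)/n) * (1 - (k:ℝ)/n) * n)) *
        Real.exp (-(n:ℝ) * klBern ((k:ℝ)/n) θ₀) := by
  obtain ⟨m, rfl⟩ : ∃ m, n = k + m := ⟨n - k, by omega⟩
  have hk0 : k ≠ 0 := by omega
  have hm0 : m ≠ 0 := by omega
  have hn : (0 : ℝ) < k + m := by positivity
  have h1α : 1 - (k : ℝ) / (k + m) = m / (k + m) := by field_simp; ring
  have hα : (k : ℝ) / (k + m) ∈ Set.Ioo 0 1 :=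
    ⟨by positivity, (div_lt_one hn).mpr (by simpa using Nat.pos_of_ne_zero hm0)⟩
  have h1θ : 0 < 1 - θ₀ := sub_pos.mpr hθ₀.2
  have hθ0 := hθ₀.1
  push_cast
  rw [Nat.add_sub_cancel_left, exp_neg_mul_klBern k m hα hθ₀ (by field_simp)
    (by rw [h1α]; field_simp), h1α, ge_iff_le]
  calc _ ≤ _ * _ := le_mul_of_one_le_left (by positivity)
          (Stirling.one_le_choose_mul_pow_mul_sqrt hk0 hm0)
    _ = ((k + m).choose k : ℝ) * θ₀ ^ k * (1 - θ₀) ^ m := by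
      simp only [div_pow]
      field_simp

theorem binomial_lower_bound (θ₀ : ℝ) (hθ₀ : θ₀ ∈ Set.Ioo (0:ℝ) 1)
    (n k : ℕ) (hn : 2 ≤ n) (hk : 1 ≤ k) (hk' : k ≤ n - 1) :
    (n.choose k : ℝ) * θ₀ ^ k * (1 - θ₀) ^ (n - k) ≥
      (1 / Real.sqrt (8 * ((k:ℝ)/n) * (1 - (k:ℝ)/n) * n)) *
        Real.exp (-(n:ℝ) * klBern ((k:ℝ)/n) θ₀) :=
  binomial_lower_bound_general θ₀ hθ₀ n k hk hk'
end
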